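/- For n ≥ 3 and t ≥ 1, let k be the least natural number with k^{t+1} ≥ n. Then the distinguishing number of μ_t(K_n) equals k. In particular, dist(μ(K_n)) = ⌈√n⌉, and if t ≥ log₂(n) − 1 then dist(μ_t(K_n)) = 2. -/

import Mathlib

/-!
For `n ≥ 3` and `t ≥ 1`, every automorphism of `μ_t(K_n)` fixes the root `w`: it is the only
vertex of degree `n` all of whose neighbours have degree `n`, since the vertices of the levels
`s < t` have degree `2(n - 1)` and every vertex of level `t` has a neighbour in level `t - 1`.
Hence automorphisms preserve the distance to `w`, i.e. the levels, and they permute the columns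
`{u_i^s : s ≤ t}`. So a colouring is distinguishing iff distinct columns carry distinct colour
words of length `t + 1`, which is possible with `d` colours iff `n ≤ d ^ (t + 1)`.
-/
open SimpleGraph

/-- The generalized Mycielskian `μ_t(G)`: levels `0,…,t` of copies of `V(G)`
plus a root `none`. Level-0 vertices are the original vertices. -/
def genMyc {V : Type*} (G : SimpleGraph V) (t : ℕ) :
    SimpleGraph (Option (Fin (t + 1) × V)) :=
  SimpleGraph.fromRel fun a b =>
    match a, b with
    | some (s, i), some (s', j) =>
        ((s : ℕ) = 0 ∧ (s' : ℕ) = 0 ∧ G.Adj i j) ∨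
        ((s' : ℕ) = (s : ℕ) + 1 ∧ G.Adj i j)
    | some (s, _), none => (s : ℕ) = t
    | _, _ => False

/-- The (traditional) Mycielskian `μ(G)`. -/
def myc {V : Type*} (G : SimpleGraph V) : SimpleGraph (Option (Fin 2 × V)) :=
  genMyc G 1

/-- The star `K_{1,m}` with center `0` and `m` leaves. -/
def starG (m : ℕ) : SimpleGraph (Fin (m + 1)) :=
  SimpleGraph.fromRel fun a _ => a = 0

/-- A `d`-coloring is distinguishing if only the trivial automorphism preserves it. -/
def IsDistinguishing {V : Type*} (H : SimpleGraph V) (d : ℕ) (c : V → Fin d) : Prop :=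
  ∀ φ : H ≃g H, (∀ v, c (φ v) = c v) → ∀ v, φ v = v

/-- The distinguishing number of a graph. -/
noncomputable def distNum {V : Type*} (H : SimpleGraph V) : ℕ :=
  sInf {d | ∃ c : V → Fin d, IsDistinguishing H d c}

section Adjacency

variable {V : Type*} {G : SimpleGraph V} {t : ℕ}

@[simp]
theorem genMyc_adj_some_some {s s' : Fin (t + 1)} {i j : V} :
    (genMyc G t).Adj (some (s, i)) (some (s', j)) ↔
      G.Adj i j ∧ ((s : ℕ) = 0 ∧ (s' : ℕ) = 0 ∨ (s' : ℕ) = s + 1 ∨ (s : ℕ) = s' + 1) := by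
  simp only [genMyc, fromRel_adj, ne_eq, Option.some.injEq, Prod.mk.injEq]
  constructor
  · rintro ⟨-, (⟨h₁, h₂, h⟩ | ⟨h₁, h⟩) | (⟨h₁, h₂, h⟩ | ⟨h₁, h⟩)⟩
    · exact ⟨h, .inl ⟨h₁, h₂⟩⟩
    · exact ⟨h, .inr (.inl h₁)⟩
    · exact ⟨h.symm, .inl ⟨h₂, h₁⟩⟩
    · exact ⟨h.symm, .inr (.inr h₁)⟩
  · rintro ⟨h, ⟨h₁, h₂⟩ | h₁ | h₁⟩
    · exact ⟨fun e => h.ne e.2, .inl (.inl ⟨h₁, h₂, h⟩)⟩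
    · exact ⟨fun e => h.ne e.2, .inl (.inr ⟨h₁, h⟩)⟩
    · exact ⟨fun e => h.ne e.2, .inr (.inr ⟨h₁, h.symm⟩)⟩

@[simp]
theorem genMyc_adj_some_none {s : Fin (t + 1)} {i : V} :
    (genMyc G t).Adj (some (s, i)) none ↔ (s : ℕ) = t := by
  simp [genMyc]

@[simp]
theorem genMyc_adj_none_some {s : Fin (t + 1)} {i : V} :
    (genMyc G t).Adj none (some (s, i)) ↔ (s : ℕ) = t := by
  rw [adj_comm, genMyc_adj_some_none]

end Adjacency

def SimpleGraph.Iso.genMyc {V W : Type*} {G : SimpleGraph V} {G' : SimpleGraph W}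
    (e : G ≃g G') (t : ℕ) : genMyc G t ≃g genMyc G' t where
  toEquiv := ((Equiv.refl _).prodCongr e.toEquiv).optionCongr
  map_rel_iff' {a b} := by
    rcases a with _ | ⟨s, i⟩ <;> rcases b with _ | ⟨s', j⟩ <;> simp [e.map_adj_iff]

@[simp]
theorem SimpleGraph.Iso.genMyc_apply_some {V W : Type*} {G : SimpleGraph V}
    {G' : SimpleGraph W} (e : G ≃g G') {t : ℕ} (s : Fin (t + 1)) (i : V) :
    e.genMyc t (some (s, i)) = some (s, e i) := rfl

theorem SimpleGraph.Hom.edist_map_le {V W : Type*} {G : SimpleGraph V} {G' : SimpleGraph W}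
    (f : G →g G') (u v : V) : G'.edist (f u) (f v) ≤ G.edist u v :=
  le_sInf <| by rintro _ ⟨p, rfl⟩; simpa using edist_le (p.map f)

theorem SimpleGraph.Iso.edist_eq {V W : Type*} {G : SimpleGraph V} {G' : SimpleGraph W}
    (e : G ≃g G') (u v : V) : G'.edist (e u) (e v) = G.edist u v := by
  refine le_antisymm (e.toHom.edist_map_le u v) ?_
  simpa using e.symm.toHom.edist_map_le (e u) (e v)

theorem SimpleGraph.Iso.dist_eq {V W : Type*} {G : SimpleGraph V} {G' : SimpleGraph W}
    (e : G ≃g G') (u v : V) : G'.dist (e u) (e v) = G.dist u v := by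
  simp only [SimpleGraph.dist, e.edist_eq]

theorem SimpleGraph.Walk.apply_le_apply_add_length {V : Type*} {G : SimpleGraph V} {f : V → ℕ}
    (hf : ∀ u v, G.Adj u v → f v ≤ f u + 1) {u v : V} (p : G.Walk u v) :
    f v ≤ f u + p.length := by
  induction p with
  | nil => simp
  | cons h p ih => have := hf _ _ h; simp only [length_cons]; omega

def genMycLevel {V : Type*} (t : ℕ) : Option (Fin (t + 1) × V) → ℕ
  | none => t + 1
  | some (s, _) => s

theorem genMycLevel_le_of_adj {V : Type*} {G : SimpleGraph V} {t : ℕ}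
    {u v : Option (Fin (t + 1) × V)} (h : (genMyc G t).Adj u v) :
    genMycLevel t v ≤ genMycLevel t u + 1 := by
  rcases u with _ | ⟨s, i⟩ <;> rcases v with _ | ⟨s', j⟩ <;>
    simp_all [genMycLevel] <;> omega

section Complete

variable {n t : ℕ}

theorem genMyc_top_exists_walk_some_none (hn : 2 ≤ n) (s : Fin (t + 1)) (i : Fin n) :
    ∃ p : (genMyc (⊤ : SimpleGraph (Fin n)) t).Walk (some (s, i)) none, p.length = t + 1 - s := by
  induction h : t - (s : ℕ) generalizing s i with
  | zero => exact ⟨.cons (by simp; omega) .nil, by simp; omega⟩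
  | succ m ih =>
    have : Nontrivial (Fin n) := Fin.nontrivial_iff_two_le.mpr hn
    obtain ⟨j, hj⟩ := exists_ne i
    obtain ⟨p, hp⟩ := ih ⟨s + 1, by omega⟩ j (by simp; omega)
    exact ⟨.cons (v := some (⟨s + 1, by omega⟩, j)) (by simp [hj.symm]) p, by simp [hp]; omega⟩

theorem genMyc_top_dist_some_none (hn : 2 ≤ n) (s : Fin (t + 1)) (i : Fin n) :
    (genMyc (⊤ : SimpleGraph (Fin n)) t).dist (some (s, i)) none = t + 1 - s := by
  obtain ⟨p, hp⟩ := genMyc_top_exists_walk_some_none hn s i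
  obtain ⟨q, hq⟩ := Reachable.exists_walk_length_eq_dist ⟨p⟩
  have := q.apply_le_apply_add_length (f := genMycLevel t) fun _ _ => genMycLevel_le_of_adj
  have := hp ▸ dist_le p
  simp only [genMycLevel] at *
  omega

open Finset in
def genMycSlice (s : Fin (t + 1)) (i : Fin n) : Finset (Option (Fin (t + 1) × Fin n)) :=
  (univ.erase i).map ((Function.Embedding.sectR s _).trans .some)

theorem card_genMycSlice (s : Fin (t + 1)) (i : Fin n) : (genMycSlice s i).card = n - 1 := by
  simp [genMycSlice]

@[simp]
theorem none_notMem_genMycSlice (s : Fin (t + 1)) (i : Fin n) : none ∉ genMycSlice s i := by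
  simp [genMycSlice]

@[simp]
theorem some_mem_genMycSlice {s s' : Fin (t + 1)} {i j : Fin n} :
    some (s', j) ∈ genMycSlice s i ↔ s' = s ∧ j ≠ i := by
  simp [genMycSlice]
  tauto

open scoped Classical

theorem genMyc_top_degree_none : (genMyc (⊤ : SimpleGraph (Fin n)) t).degree none = n := by
  have : (genMyc (⊤ : SimpleGraph (Fin n)) t).neighborFinset none =
      Finset.univ.map ((Function.Embedding.sectR (Fin.last t) _).trans .some) := by
    ext (_ | ⟨s, i⟩) <;> simp [Fin.ext_iff, eq_comm]
  simp [← card_neighborFinset_eq_degree, this]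

theorem genMyc_top_degree_last (hn : 1 ≤ n) (ht : 1 ≤ t) (i : Fin n) :
    (genMyc (⊤ : SimpleGraph (Fin n)) t).degree (some (Fin.last t, i)) = n := by
  have : (genMyc (⊤ : SimpleGraph (Fin n)) t).neighborFinset (some (Fin.last t, i)) =
      insert none (genMycSlice ⟨t - 1, by omega⟩ i) := by
    ext (_ | ⟨s', j⟩)
    · simp
    · simp only [mem_neighborFinset, genMyc_adj_some_some, top_adj, ne_eq, Finset.mem_insert,
        some_mem_genMycSlice, reduceCtorEq, false_or, Fin.ext_iff, Fin.val_last]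
      omega
  rw [← card_neighborFinset_eq_degree, this, Finset.card_insert_of_notMem (by simp),
    card_genMycSlice]
  omega

theorem genMyc_top_degree_of_lt {s : Fin (t + 1)} (hs : (s : ℕ) < t) (i : Fin n) :
    (genMyc (⊤ : SimpleGraph (Fin n)) t).degree (some (s, i)) = 2 * (n - 1) := by
  have : (genMyc (⊤ : SimpleGraph (Fin n)) t).neighborFinset (some (s, i)) =
      genMycSlice ⟨s - 1, by omega⟩ i ∪ genMycSlice ⟨s + 1, by omega⟩ i := by
    ext (_ | ⟨s', j⟩)
    · simp; omega
    · simp only [mem_neighborFinset, genMyc_adj_some_some, top_adj, ne_eq, Finset.mem_union,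
        some_mem_genMycSlice, Fin.ext_iff]
      omega
  rw [← card_neighborFinset_eq_degree, this, Finset.card_union_of_disjoint, card_genMycSlice,
    card_genMycSlice, two_mul]
  refine Finset.disjoint_left.mpr fun {v} h₁ h₂ => ?_
  rcases v with _ | ⟨s', j⟩
  · simp at h₁
  · simp only [some_mem_genMycSlice, Fin.ext_iff] at h₁ h₂
    omega

variable (φ : genMyc (⊤ : SimpleGraph (Fin n)) t ≃g genMyc (⊤ : SimpleGraph (Fin n)) t)

theorem genMyc_top_iso_apply_none (hn : 3 ≤ n) (ht : 1 ≤ t) : φ none = none := by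
  have deg_ne {s : Fin (t + 1)} (hs : (s : ℕ) < t) (i : Fin n) :
      (genMyc (⊤ : SimpleGraph (Fin n)) t).degree (some (s, i)) ≠ n := by
    rw [genMyc_top_degree_of_lt hs]; omega
  rcases hφ : φ none with _ | ⟨s, i⟩
  · rfl
  exfalso
  have hs : s = Fin.last t := by
    refine Fin.ext (le_antisymm (Nat.le_of_lt_succ s.2) (not_lt.mp fun hs => deg_ne hs i ?_))
    rw [← hφ, φ.degree_eq, genMyc_top_degree_none]
  subst hs
  have : Nontrivial (Fin n) := Fin.nontrivial_iff_two_le.mpr (by omega)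
  obtain ⟨j, hj⟩ := exists_ne i
  set w : Option (Fin (t + 1) × Fin n) := some (⟨t - 1, by omega⟩, j)
  have hw : (genMyc (⊤ : SimpleGraph (Fin n)) t).Adj (φ none) w := by
    simp [hφ, w, hj.symm]; omega
  rcases hv : φ.symm w with _ | ⟨s', k⟩
  · simpa [hv] using φ.symm.map_adj_iff.mpr hw
  · have hs' : (s' : ℕ) = t := by simpa [hv] using φ.symm.map_adj_iff.mpr hw
    refine deg_ne (s := ⟨t - 1, by omega⟩) (by simp; omega) j ?_
    change (genMyc _ t).degree w = n
    obtain rfl : s' = Fin.last t := Fin.ext hs'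
    rw [← φ.apply_symm_apply w, hv, φ.degree_eq, genMyc_top_degree_last (by omega) ht k]

theorem genMyc_top_iso_exists_apply_some_eq (hn : 3 ≤ n) (ht : 1 ≤ t) (s : Fin (t + 1))
    (i : Fin n) : ∃ j, φ (some (s, i)) = some (s, j) := by
  rcases hv : φ (some (s, i)) with _ | ⟨s', j⟩
  · exact absurd (φ.injective (hv.trans (genMyc_top_iso_apply_none φ hn ht).symm)) (by simp)
  refine ⟨j, ?_⟩
  have := φ.dist_eq (some (s, i)) none
  rw [hv, genMyc_top_iso_apply_none φ hn ht, genMyc_top_dist_some_none (by omega),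
    genMyc_top_dist_some_none (by omega)] at this
  obtain rfl : s' = s := Fin.ext (by omega)
  rfl

/-- Two vertices in consecutive levels are non-adjacent exactly when they lie in the same
column. -/
theorem genMyc_top_iso_exists_column_map (hn : 3 ≤ n) (ht : 1 ≤ t) :
    ∃ f : Fin n → Fin n, ∀ s i, φ (some (s, i)) = some (s, f i) := by
  choose f hf using genMyc_top_iso_exists_apply_some_eq φ hn ht
  refine ⟨f 0, fun s i => ?_⟩
  induction s using Fin.induction with
  | zero => exact hf 0 i
  | succ s ih =>
    have hnadj : ¬(genMyc (⊤ : SimpleGraph (Fin n)) t).Adj (φ (some (s.castSucc, i)))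
        (φ (some (s.succ, i))) := by
      simp [φ.map_adj_iff]
    rw [ih, hf s.succ i] at hnadj
    simp only [genMyc_adj_some_some, top_adj, Fin.val_castSucc, Fin.val_succ, true_or, or_true,
      and_true, not_not] at hnadj
    rw [hf, hnadj]

theorem genMyc_top_exists_isDistinguishing (hn : 3 ≤ n) (ht : 1 ≤ t) {d : ℕ}
    (hd : n ≤ d ^ (t + 1)) :
    ∃ c, IsDistinguishing (genMyc (⊤ : SimpleGraph (Fin n)) t) d c := by
  have hd₀ : 0 < d := Nat.pos_of_ne_zero (by rintro rfl; simp at hd; omega)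
  obtain ⟨g⟩ : Nonempty (Fin n ↪ (Fin (t + 1) → Fin d)) :=
    Function.Embedding.nonempty_of_card_le (by simpa using hd)
  refine ⟨fun v => v.elim ⟨0, hd₀⟩ fun p => g p.2 p.1, fun φ hφ v => ?_⟩
  obtain ⟨f, hf⟩ := genMyc_top_iso_exists_column_map φ hn ht
  have hf_eq (i : Fin n) : f i = i :=
    g.injective (funext fun s => by simpa [hf] using hφ (some (s, i)))
  rcases v with _ | ⟨s, i⟩
  · exact genMyc_top_iso_apply_none φ hn ht
  · rw [hf, hf_eq]

end Complete

theorem IsDistinguishing.iso_eq_self_of_genMyc {V : Type*} {G : SimpleGraph V} {t d : ℕ}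
    {c : Option (Fin (t + 1) × V) → Fin d} (hc : IsDistinguishing (genMyc G t) d c)
    (e : G ≃g G) (he : ∀ s i, c (some (s, e i)) = c (some (s, i))) (i : V) : e i = i := by
  have := hc (e.genMyc t) (by rintro (_ | ⟨s, j⟩); exacts [rfl, he s j]) (some (0, i))
  simpa using this

theorem genMyc_top_le_pow_of_isDistinguishing {n t d : ℕ}
    {c : Option (Fin (t + 1) × Fin n) → Fin d}
    (hc : IsDistinguishing (genMyc (⊤ : SimpleGraph (Fin n)) t) d c) : n ≤ d ^ (t + 1) := by
  by_contra! h
  let word (i : Fin n) (s : Fin (t + 1)) : Fin d := c (some (s, i))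
  obtain ⟨i, j, hij, hword⟩ := Fintype.exists_ne_map_eq_of_card_lt word (by simpa using h)
  have := hc.iso_eq_self_of_genMyc (Iso.completeGraph (Equiv.swap i j))
    (fun s k => congrFun (Equiv.apply_swap_eq_self (v := word) hword k) s) i
  exact hij ((Equiv.swap_apply_left i j).symm.trans this).symm

theorem distNum_eq_of_isDistinguishing {V : Type*} {H : SimpleGraph V} {k : ℕ}
    (hk : ∃ c, IsDistinguishing H k c)
    (hmin : ∀ d (c : V → Fin d), IsDistinguishing H d c → k ≤ d) : distNum H = k :=
  le_antisymm (Nat.sInf_le hk) (le_csInf ⟨k, hk⟩ fun d ⟨c, hc⟩ => hmin d c hc)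

theorem distNum_genMyc_top {n t k : ℕ} (hn : 3 ≤ n) (ht : 1 ≤ t) (hk : n ≤ k ^ (t + 1))
    (hk' : ∀ j : ℕ, j < k → j ^ (t + 1) < n) :
    distNum (genMyc (⊤ : SimpleGraph (Fin n)) t) = k :=
  distNum_eq_of_isDistinguishing (genMyc_top_exists_isDistinguishing hn ht hk) fun d _ hc =>
    not_lt.mp fun hd => (hk' d hd).not_ge (genMyc_top_le_pow_of_isDistinguishing hc)

theorem Nat.ceil_sqrt_le_iff (n j : ℕ) : ⌈Real.sqrt n⌉₊ ≤ j ↔ n ≤ j ^ 2 := by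
  rw [Nat.ceil_le, Real.sqrt_le_left (Nat.cast_nonneg j)]
  norm_cast

theorem le_two_pow_of_logb_le {n t : ℕ} (hn : 0 < n) (h : Real.logb 2 n - 1 ≤ (t : ℝ)) :
    n ≤ 2 ^ (t + 1) := by
  have := (Real.logb_le_iff_le_rpow one_lt_two (by positivity)).mp (sub_le_iff_le_add.mp h)
  rw [← Nat.cast_add_one, Real.rpow_natCast] at this
  exact_mod_cast this

theorem stmt_16 (n t k : ℕ) (hn : 3 ≤ n) (ht : 1 ≤ t)
    (hk : n ≤ k ^ (t + 1)) (hk' : ∀ j : ℕ, j < k → j ^ (t + 1) < n) :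
    distNum (genMyc (⊤ : SimpleGraph (Fin n)) t) = k ∧
    distNum (myc (⊤ : SimpleGraph (Fin n))) = ⌈Real.sqrt n⌉₊ ∧
    (Real.logb 2 n - 1 ≤ (t : ℝ) →
      distNum (genMyc (⊤ : SimpleGraph (Fin n)) t) = 2) := by
  refine ⟨distNum_genMyc_top hn ht hk hk', ?_, fun hlog => ?_⟩
  · refine distNum_genMyc_top hn le_rfl ((Nat.ceil_sqrt_le_iff n _).mp le_rfl) fun j hj => ?_
    exact not_le.mp fun h => hj.not_ge ((Nat.ceil_sqrt_le_iff n j).mpr h)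
  · refine distNum_genMyc_top hn ht (le_two_pow_of_logb_le (by omega) hlog) fun j hj => ?_
    have : j ^ (t + 1) ≤ 1 := pow_le_one₀ (Nat.zero_le j) (by omega)
    omega
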